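/- arXiv:1507.04295 — 5 statements merged into one kernel-verified Lean document; each statement's English description precedes it below -/
import Mathlib

section
/- Let p ≥ 1, let z₁, …, z_p be nonzero complex numbers such that |z₁| > |z_j| for every j ≥ 2, and let c₁, …, c_p be complex numbers with c₁ ≠ 0. Define the sequence s_n = Σ_{i=1}^{p} c_i z_iⁿ. Then s_n ≠ 0 for all sufficiently large n, and the sequence of ratios s_{n+1}/s_n converges to z₁ as n → ∞. -/
open Filter

/-- Bernoulli's method: for `s n = ∑ i, c i * z i ^ n` with a strictly dominant
root `z 0` and `c 0 ≠ 0`, the successive ratios `s (n+1) / s n` converge to the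
dominant root, and `s n ≠ 0` for all sufficiently large `n`. -/
theorem bernoulli_ratio_tendsto_dominant_root
    (p : ℕ) (hp : 1 ≤ p) (z c : Fin p → ℂ)
    (hz : ∀ i, z i ≠ 0)
    (hdom : ∀ j : Fin p, j ≠ ⟨0, hp⟩ → ‖z j‖ < ‖z ⟨0, hp⟩‖)
    (hc : c ⟨0, hp⟩ ≠ 0)
    (s : ℕ → ℂ) (hs : ∀ n, s n = ∑ i, c i * z i ^ n) :
    (∀ᶠ n in Filter.atTop, s n ≠ 0) ∧
      Filter.Tendsto (fun n => s (n + 1) / s n) Filter.atTop (nhds (z ⟨0, hp⟩)) := by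
  set i0 : Fin p := ⟨0, hp⟩ with hi0
  set z0 := z i0 with hz0def
  have hz0ne : z0 ≠ 0 := hz i0
  set t : ℕ → ℂ := fun n => ∑ i, c i * (z i / z0) ^ n with ht
  have hst : ∀ n, s n = z0 ^ n * t n := by
    intro n
    rw [hs, ht, Finset.mul_sum]
    refine Finset.sum_congr rfl fun i _ => ?_
    rw [div_pow]
    field_simp
  have htend : Tendsto t atTop (nhds (c i0)) := by
    have h1 : Tendsto t atTop (nhds (∑ i : Fin p, if i = i0 then c i0 else 0)) := by
      apply tendsto_finset_sum
      intro i _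
      by_cases h : i = i0
      · subst h
        simp only [if_true, ← hz0def, div_self hz0ne, one_pow, mul_one]
        exact tendsto_const_nhds
      · simp only [h, if_false]
        rw [show (0:ℂ) = c i * 0 by ring]
        apply Tendsto.const_mul
        apply tendsto_pow_atTop_nhds_zero_of_norm_lt_one
        rw [norm_div,
          div_lt_one (norm_pos_iff.mpr hz0ne)]
        exact hdom i h
    simpa using h1
  have htne : ∀ᶠ n in atTop, t n ≠ 0 := htend.eventually_ne hc
  have hsne : ∀ᶠ n in atTop, s n ≠ 0 := by
    filter_upwards [htne] with n hn
    rw [hst]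
    exact mul_ne_zero (pow_ne_zero _ hz0ne) hn
  refine ⟨hsne, ?_⟩
  have htend' : Tendsto (fun n => t (n + 1)) atTop (nhds (c i0)) :=
    htend.comp (tendsto_add_atTop_nat 1)
  have hratio : Tendsto (fun n => z0 * (t (n + 1) / t n)) atTop (nhds z0) := by
    have := (tendsto_const_nhds (x := z0) (f := atTop)).mul (htend'.div htend hc)
    simpa [div_self hc] using this
  refine hratio.congr' ?_
  filter_upwards [htne] with n hn
  rw [hst, hst]
  rw [pow_succ]
  field_simp
end

section
/- Let p ≥ 1, let z₁, …, z_p be nonzero complex numbers with strictly decreasing moduli |z₁| > |z₂| > … > |z_p| > 0, and let c₁, …, c_p be nonzero complex numbers. Define s_n = Σ_{i=1}^{p} c_i z_iⁿ, and for m with 1 ≤ m ≤ p define the Hankel determinant H_m^{(n)} = det of the m × m matrix whose (i,j) entry is s_{n+i+j} (indices i, j ranging over 0, …, m−1). Then for each such m, H_m^{(n)} ≠ 0 for all sufficiently large n, and the sequence of ratios H_m^{(n+1)} / H_m^{(n)} converges to the product z₁ z₂ ⋯ z_m as n → ∞. -/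
open Matrix Filter Finset

/-- Expansion of a determinant whose rows are linear combinations. -/
private lemma aitken_det_expand {m p : ℕ} (a : Fin m → Fin p → ℂ) (v : Fin p → Fin m → ℂ) :
    Matrix.det (Matrix.of fun i j => ∑ k, a i k * v k j) =
    ∑ k : Fin m → Fin p, (∏ i, a i (k i)) * Matrix.det (Matrix.of fun i j => v (k i) j) := by
  have h : (Matrix.of fun i j => ∑ k, a i k * v k j)
      = fun i => ∑ k : Fin p, a i k • v k := by
    ext i j; simp [Finset.sum_apply]
  have h2 : ∀ k : Fin m → Fin p, Matrix.of (fun i j => v (k i) j) = fun i => v (k i) := by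
    intro k; ext i j; simp
  have key := (Matrix.detRowAlternating :
      (Fin m → ℂ) [⋀^Fin m]→ₗ[ℂ] ℂ).toMultilinearMap.map_sum (fun i k => a i k • v k)
  have key2 := fun k : Fin m → Fin p =>
    (Matrix.detRowAlternating : (Fin m → ℂ) [⋀^Fin m]→ₗ[ℂ] ℂ).toMultilinearMap.map_smul_univ
      (fun i => a i (k i)) (fun i => v (k i))
  simp only [AlternatingMap.coe_multilinearMap] at key key2
  show Matrix.detRowAlternating _ = _
  rw [h, key]
  refine Finset.sum_congr rfl fun k _ => ?_
  rw [key2 k, h2 k]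
  rw [smul_eq_mul]
  rfl

private lemma aitken_strictMono_le {m : ℕ} (g : Fin m → ℕ) (hg : StrictMono g) (i : Fin m) :
    (i : ℕ) ≤ g i := by
  have key : ∀ n : ℕ, ∀ i : Fin m, (i : ℕ) = n → n ≤ g i := by
    intro n
    induction n with
    | zero => intro i _; exact Nat.zero_le _
    | succ n ih =>
      intro i hi
      have him := i.isLt
      have hn : n < m := by omega
      have h1 := ih ⟨n, hn⟩ rfl
      have h2 := hg (show (⟨n, hn⟩ : Fin m) < i by simp [Fin.lt_def, hi])
      omega
  exact key _ i rfl

/-- If `k` is injective and hits some index `≥ m`, the product of moduli is strictly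
smaller than the product over the first `m` indices. -/
private lemma aitken_prod_abs_lt {p m : ℕ} (hm : m ≤ p) (z : Fin p → ℂ) (hz : ∀ i, z i ≠ 0)
    (hdec : ∀ i j : Fin p, i < j → ‖z j‖ < ‖z i‖)
    (k : Fin m → Fin p) (hk : Function.Injective k) (i₀ : Fin m) (hi₀ : m ≤ (k i₀ : ℕ)) :
    ∏ i, ‖z (k i)‖ < ∏ i : Fin m, ‖z (Fin.castLE hm i)‖ := by
  classical
  set S : Finset (Fin p) := Finset.image k Finset.univ with hS
  have hcard : S.card = m := by
    rw [hS, Finset.card_image_of_injective _ hk, Finset.card_univ, Fintype.card_fin]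
  set e := S.orderEmbOfFin hcard with he
  have hmono : StrictMono e := (S.orderEmbOfFin hcard).strictMono
  have hle : ∀ i : Fin m, (i : ℕ) ≤ ((e i : Fin p) : ℕ) := by
    intro i
    exact aitken_strictMono_le (fun i => ((e i : Fin p) : ℕ))
      (fun a b hab => by exact_mod_cast hmono hab) i
  have himg : Finset.image (⇑e) Finset.univ = S := by
    apply Finset.coe_injective
    rw [Finset.coe_image, Finset.coe_univ, Set.image_univ, he, Finset.range_orderEmbOfFin]
  have h1 : ∏ i, ‖z (k i)‖ = ∏ i : Fin m, ‖z (e i)‖ := by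
    rw [show (∏ i, ‖z (k i)‖)
        = ∏ x ∈ S, ‖z x‖ from
      (Finset.prod_image (f := fun x => ‖z x‖) (s := Finset.univ) (g := k)
        (fun x _ y _ h => hk h)).symm]
    rw [← himg, Finset.prod_image (fun x _ y _ h => e.injective h)]
  rw [h1]
  -- find the strict index
  have hmem : k i₀ ∈ S := by simp [hS]
  obtain ⟨j, hj⟩ : ∃ j : Fin m, e j = k i₀ := by
    have : k i₀ ∈ Set.range e := by rw [Finset.range_orderEmbOfFin]; exact_mod_cast hmem
    obtain ⟨j, hj⟩ := this
    exact ⟨j, hj⟩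
  have hjlt : (j : ℕ) < ((e j : Fin p) : ℕ) := by
    rw [hj]; exact lt_of_lt_of_le j.isLt hi₀
  refine Finset.prod_lt_prod (fun i _ => ?_) (fun i _ => ?_) ⟨j, Finset.mem_univ j, ?_⟩
  · exact (norm_pos_iff.mpr (hz _))
  · rcases eq_or_lt_of_le (hle i) with h | h
    · have : e i = Fin.castLE hm i := by
        apply Fin.ext; simp [← h]
      rw [this]
    · exact le_of_lt (hdec _ _ (by rwa [Fin.lt_def]))
  · exact hdec _ _ (by rw [Fin.lt_def]; exact lt_of_le_of_lt (by simp) hjlt)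

/-- Aitken's 1926 generalization of Bernoulli's method: for
`s n = ∑ i, c i * z i ^ n` with roots of pairwise distinct (strictly decreasing)
nonzero moduli and nonzero coefficients, the ratios of successive `m × m`
Hankel determinants converge to the product of the `m` roots of largest modulus. -/
theorem aitken_hankel_ratio_tendsto_prod_roots
    (p : ℕ) (hp : 1 ≤ p) (z c : Fin p → ℂ)
    (hz : ∀ i, z i ≠ 0)
    (hdec : ∀ i j : Fin p, i < j → ‖z j‖ < ‖z i‖)
    (hc : ∀ i, c i ≠ 0)
    (s : ℕ → ℂ) (hs : ∀ n, s n = ∑ i, c i * z i ^ n)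
    (H : ℕ → ℕ → ℂ)
    (hH : ∀ m n, H m n = Matrix.det (Matrix.of fun i j : Fin m => s (n + i + j))) :
    ∀ m : ℕ, 1 ≤ m → ∀ hm : m ≤ p,
      (∀ᶠ n in Filter.atTop, H m n ≠ 0) ∧
        Filter.Tendsto (fun n => H m (n + 1) / H m n) Filter.atTop
          (nhds (∏ i : Fin m, z (Fin.castLE hm i))) := by
  intro m hm1 hm
  classical
  set v : Fin m → ℂ := fun i => z (Fin.castLE hm i) with hv
  set w : ℂ := ∏ i, v i with hwdef
  have hw : w ≠ 0 := Finset.prod_ne_zero_iff.mpr fun i _ => hz _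
  set V : Matrix (Fin m) (Fin m) ℂ := Matrix.vandermonde v with hV
  have hVdet : V.det ≠ 0 := by
    rw [hV, Matrix.det_vandermonde_ne_zero_iff]
    intro a b hab
    by_contra hne
    rcases lt_or_gt_of_ne hne with h | h
    · exact absurd (congrArg (‖·‖) hab).symm
        (ne_of_lt (hdec _ _ (by rwa [Fin.lt_def])))
    · exact absurd (congrArg (‖·‖) hab)
        (ne_of_lt (hdec _ _ (by rwa [Fin.lt_def])))
  set t : (Fin m → Fin p) → ℂ := fun k =>
    (∏ i, c (k i) * z (k i) ^ (i : ℕ)) *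
      Matrix.det (Matrix.of fun i j : Fin m => z (k i) ^ (j : ℕ)) with htdef
  set r : (Fin m → Fin p) → ℂ := fun k => ∏ i, z (k i) with hrdef
  have hexp : ∀ n, H m n = ∑ k : Fin m → Fin p, t k * r k ^ n := by
    intro n
    rw [hH]
    have hM : (Matrix.of fun i j : Fin m => s (n + i + j)) =
        (Matrix.of fun i j : Fin m => ∑ k, (c k * z k ^ (n + (i : ℕ))) * z k ^ (j : ℕ)) := by
      ext i j
      rw [Matrix.of_apply, Matrix.of_apply, hs]
      refine Finset.sum_congr rfl fun x _ => ?_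
      rw [pow_add, pow_add]; ring
    rw [hM, aitken_det_expand (fun i k => c k * z k ^ (n + (i : ℕ))) (fun k j => z k ^ (j : ℕ))]
    refine Finset.sum_congr rfl fun k _ => ?_
    have hpr : ∏ i, c (k i) * z (k i) ^ (n + (i : ℕ))
        = r k ^ n * ∏ i, c (k i) * z (k i) ^ (i : ℕ) := by
      rw [hrdef, ← Finset.prod_pow, ← Finset.prod_mul_distrib]
      exact Finset.prod_congr rfl fun i _ => by rw [pow_add]; ring
    rw [hpr, htdef]; ring
  set P : (Fin m → Fin p) → Prop :=
    fun k => Function.Injective k ∧ ∀ i, (k i : ℕ) < m with hPdef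
  have hrP : ∀ k, P k → r k = w := by
    rintro k ⟨hinj, hlt⟩
    have hbij : Function.Bijective (fun i : Fin m => (⟨(k i : ℕ), hlt i⟩ : Fin m)) := by
      rw [← Finite.injective_iff_bijective]
      intro a b hab
      have h' : (k a : ℕ) = (k b : ℕ) := by simpa [Fin.ext_iff] using hab
      exact hinj (Fin.ext h')
    calc r k = ∏ i, v ((fun i : Fin m => (⟨(k i : ℕ), hlt i⟩ : Fin m)) i) := rfl
      _ = ∏ i, v i := Function.Bijective.prod_comp hbij v
      _ = w := hwdef.symm
  have ht0 : ∀ k, ¬ Function.Injective k → t k = 0 := by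
    intro k hk
    obtain ⟨a, b, hab, hne⟩ := Function.not_injective_iff.mp hk
    have : Matrix.det (Matrix.of fun i j : Fin m => z (k i) ^ (j : ℕ)) = 0 := by
      refine Matrix.det_zero_of_row_eq hne (funext fun j => ?_)
      simp [hab]
    rw [htdef]
    simp [this]
  have habs : ∀ k : Fin m → Fin p, Function.Injective k → (¬ ∀ i, (k i : ℕ) < m) →
      ‖r k‖ < ‖w‖ := by
    intro k hinj hlt
    push_neg at hlt
    obtain ⟨i₀, hi₀⟩ := hlt
    have e1 : ‖r k‖ = ∏ i, ‖z (k i)‖ := by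
      rw [hrdef]; exact norm_prod _ _
    have e2 : ‖w‖ = ∏ i : Fin m, ‖z (Fin.castLE hm i)‖ := by
      rw [hwdef, hv]; exact norm_prod _ _
    rw [e1, e2]
    exact aitken_prod_abs_lt hm z hz hdec k hinj i₀ hi₀
  set g : ℕ → ℂ := fun n => ∑ k : Fin m → Fin p, t k * (r k / w) ^ n with hgdef
  have hHg : ∀ n, H m n = g n * w ^ n := by
    intro n
    rw [hexp, hgdef, Finset.sum_mul]
    refine Finset.sum_congr rfl fun k _ => ?_
    have hcan : (r k / w) ^ n * w ^ n = r k ^ n := by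
      rw [div_pow, div_mul_cancel₀ _ (pow_ne_zero n hw)]
    conv_rhs => rw [mul_assoc, hcan]
  set a0 : ℂ := ∑ k : Fin m → Fin p, (if P k then t k else 0) with ha0def
  have hga : Tendsto g atTop (nhds a0) := by
    rw [hgdef, ha0def]
    refine tendsto_finset_sum _ fun k _ => ?_
    by_cases hPk : P k
    · have h1 : r k / w = 1 := by rw [hrP k hPk]; exact div_self hw
      rw [if_pos hPk]
      have : (fun n : ℕ => t k * (r k / w) ^ n) = fun _ => t k := by
        funext n; rw [h1, one_pow, mul_one]
      rw [this]; exact tendsto_const_nhds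
    · rw [if_neg hPk]
      by_cases hinj : Function.Injective k
      · have h1 : ¬ ∀ i, (k i : ℕ) < m := fun h => hPk ⟨hinj, h⟩
        have h2 : ‖r k / w‖ < 1 := by
          rw [norm_div]
          rw [div_lt_one (norm_pos_iff.mpr hw)]
          exact habs k hinj h1
        have h3 := (tendsto_pow_atTop_nhds_zero_of_norm_lt_one h2).const_mul (t k)
        simpa using h3
      · have : (fun n : ℕ => t k * (r k / w) ^ n) = fun _ => 0 := by
          funext n; rw [ht0 k hinj, zero_mul]
        rw [this]; exact tendsto_const_nhds
  have ha0 : a0 = (∏ i, c (Fin.castLE hm i)) * (V.det * V.det) := by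
    rw [ha0def, ← Finset.sum_filter]
    have hbij : ∑ k ∈ Finset.univ.filter P, t k
        = ∑ σ : Equiv.Perm (Fin m), t (Fin.castLE hm ∘ σ) := by
      refine (Finset.sum_bij (fun (σ : Equiv.Perm (Fin m)) _ => Fin.castLE hm ∘ σ)
        ?_ ?_ ?_ ?_).symm
      · intro σ _
        rw [Finset.mem_filter]
        refine ⟨Finset.mem_univ _, (Fin.castLE_injective hm).comp σ.injective, fun i => ?_⟩
        exact (σ i).isLt
      · intro σ1 _ σ2 _ h
        ext i
        have := congrFun h i
        exact congrArg Fin.val ((Fin.castLE_injective hm) this)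
      · intro k hk
        rw [Finset.mem_filter] at hk
        obtain ⟨-, hinj, hlt⟩ := hk
        have hbj : Function.Bijective (fun i : Fin m => (⟨(k i : ℕ), hlt i⟩ : Fin m)) := by
          rw [← Finite.injective_iff_bijective]
          intro a b hab
          have h' : (k a : ℕ) = (k b : ℕ) := by simpa [Fin.ext_iff] using hab
          exact hinj (Fin.ext h')
        refine ⟨Equiv.ofBijective _ hbj, Finset.mem_univ _, ?_⟩
        funext i
        apply Fin.ext
        rfl
      · intro σ _; rfl
    rw [hbij]
    have hterm : ∀ σ : Equiv.Perm (Fin m), t (Fin.castLE hm ∘ σ)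
        = (∏ i, c (Fin.castLE hm i)) * V.det *
            ((Equiv.Perm.sign σ : ℤ) * ∏ i, v (σ i) ^ (i : ℕ)) := by
      intro σ
      rw [htdef]
      have h1 : (Matrix.of fun i j : Fin m => z (Fin.castLE hm ((σ : Fin m → Fin m) i)) ^ (j : ℕ))
          = V.submatrix σ id := by
        ext i j
        simp [hV, Matrix.vandermonde, hv]
      simp only [Function.comp_apply]
      rw [h1, Matrix.det_permute, Finset.prod_mul_distrib]
      have h2 : ∏ i, c (Fin.castLE hm (σ i)) = ∏ i, c (Fin.castLE hm i) :=
        Equiv.prod_comp σ (fun i => c (Fin.castLE hm i))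
      have h3 : ∏ i, z (Fin.castLE hm (σ i)) ^ (i : ℕ) = ∏ i, v (σ i) ^ (i : ℕ) := by
        refine Finset.prod_congr rfl fun i _ => ?_
        rw [hv]
      rw [h2, h3]
      push_cast
      ring
    rw [Finset.sum_congr rfl (fun σ _ => hterm σ)]
    rw [← Finset.mul_sum]
    have h4 : V.det = ∑ σ : Equiv.Perm (Fin m), (Equiv.Perm.sign σ : ℤ) * ∏ i, v (σ i) ^ (i : ℕ) := by
      rw [Matrix.det_apply]
      refine Finset.sum_congr rfl fun σ _ => ?_
      rw [Units.smul_def, zsmul_eq_mul]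
      congr 1
    rw [← h4]
    ring
  have ha0ne : a0 ≠ 0 := by
    rw [ha0]
    exact mul_ne_zero (Finset.prod_ne_zero_iff.mpr fun i _ => hc _)
      (mul_ne_zero hVdet hVdet)
  have hge : ∀ᶠ n in atTop, g n ≠ 0 := hga.eventually_ne ha0ne
  constructor
  · filter_upwards [hge] with n hn
    rw [hHg n]
    exact mul_ne_zero hn (pow_ne_zero n hw)
  · have hga' : Tendsto (fun n => g (n + 1)) atTop (nhds a0) :=
      hga.comp (tendsto_add_atTop_nat 1)
    have hdiv : Tendsto (fun n => g (n + 1) / g n) atTop (nhds (a0 / a0)) :=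
      hga'.div hga ha0ne
    rw [div_self ha0ne] at hdiv
    have hlim : Tendsto (fun n => w * (g (n + 1) / g n)) atTop (nhds w) := by
      have := hdiv.const_mul w
      simpa using this
    refine hlim.congr' ?_
    filter_upwards [hge] with n hn
    rw [hHg n, hHg (n + 1), pow_succ]
    field_simp
end

section
/- Let p ≥ 3, let z₁, …, z_p be nonzero complex numbers with strictly decreasing moduli |z₁| > |z₂| > … > |z_p| > 0, and let c₁, …, c_p be complex numbers with c₁ ≠ 0 and c₂ ≠ 0. Define s_n = Σ_{i=1}^{p} c_i z_iⁿ and, for n large enough that s_n ≠ 0, set t_n = s_{n+1}/s_n. Then the first differences Δt_n = t_{n+1} − t_n are nonzero for all sufficiently large n, and the ratio Δt_{n+1}/Δt_n converges to z₂/z₁ as n → ∞. -/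
open Filter

private lemma aitken_aux_s (p : ℕ) (z c : Fin p → ℂ) (i0 : Fin p)
    (hz : z i0 ≠ 0)
    (hlt : ∀ i, i ≠ i0 → ‖z i‖ < ‖z i0‖)
    (s : ℕ → ℂ) (hs : ∀ n, s n = ∑ i, c i * z i ^ n) :
    Filter.Tendsto (fun n => s n / (z i0) ^ n) Filter.atTop (nhds (c i0)) := by
  have key : ∀ n, s n / z i0 ^ n = ∑ i, c i * (z i / z i0) ^ n := by
    intro n
    rw [hs, Finset.sum_div]
    refine Finset.sum_congr rfl fun i _ => ?_
    rw [div_pow, mul_div_assoc]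
  have hlim : Filter.Tendsto (fun n => ∑ i, c i * (z i / z i0) ^ n) Filter.atTop
      (nhds (∑ i, if i = i0 then c i else 0)) := by
    refine tendsto_finset_sum _ fun i _ => ?_
    by_cases h : i = i0
    · subst h
      simp only [if_pos rfl, div_self hz, one_pow, mul_one]
      exact tendsto_const_nhds
    · simp only [if_neg h]
      have : Filter.Tendsto (fun n => (z i / z i0) ^ n) Filter.atTop (nhds 0) := by
        apply tendsto_pow_atTop_nhds_zero_of_norm_lt_one
        rw [norm_div, div_lt_one (norm_pos_iff.mpr hz)]
        exact hlt i h
      simpa using this.const_mul (c i)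
  rw [Finset.sum_ite_eq' Finset.univ i0 c] at hlim
  simp only [Finset.mem_univ, if_pos] at hlim
  exact hlim.congr fun n => (key n).symm


private lemma aitken_aux_d (p : ℕ) (z c : Fin p → ℂ) (i0 i1 : Fin p)
    (hz : ∀ i, z i ≠ 0) (hne : i0 ≠ i1)
    (h10 : ‖z i1‖ < ‖z i0‖)
    (hlt2 : ∀ i, i ≠ i0 → i ≠ i1 → ‖z i‖ < ‖z i1‖)
    (s : ℕ → ℂ) (hs : ∀ n, s n = ∑ i, c i * z i ^ n) :
    Filter.Tendsto (fun n => (s (n+2) * s n - s (n+1)^2) / (z i0 * z i1)^n) Filter.atTop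
      (nhds (c i0 * c i1 * (z i0 - z i1)^2)) := by
  set w := z i0 * z i1 with hw
  have hwne : w ≠ 0 := mul_ne_zero (hz i0) (hz i1)
  have hkey : ∀ n, s (n+2) * s n - s (n+1)^2
      = ∑ q : Fin p × Fin p, c q.1 * c q.2 * z q.1 * (z q.1 - z q.2) * (z q.1 * z q.2)^n := by
    intro n
    rw [hs, hs, hs, sq, Finset.sum_mul_sum, Finset.sum_mul_sum, Fintype.sum_prod_type,
      ← Finset.sum_sub_distrib]
    refine Finset.sum_congr rfl fun i _ => ?_
    rw [← Finset.sum_sub_distrib]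
    refine Finset.sum_congr rfl fun j _ => ?_
    rw [mul_pow]
    ring
  have hd : ∀ n, (s (n+2) * s n - s (n+1)^2) / w ^ n
      = ∑ q : Fin p × Fin p, c q.1 * c q.2 * z q.1 * (z q.1 - z q.2) * ((z q.1 * z q.2)/w)^n := by
    intro n
    rw [hkey n, Finset.sum_div]
    refine Finset.sum_congr rfl fun q _ => ?_
    rw [div_pow, mul_div_assoc]
  set L : Fin p × Fin p → ℂ := fun q =>
    (if q = (i0, i1) then c i0 * c i1 * z i0 * (z i0 - z i1) else 0)
    + (if q = (i1, i0) then c i0 * c i1 * z i1 * (z i1 - z i0) else 0) with hL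
  have habs : ∀ i, i ≠ i0 → ‖z i‖ ≤ ‖z i1‖ := by
    intro i h
    by_cases h' : i = i1
    · rw [h']
    · exact (hlt2 i h h').le
  have hlim : Filter.Tendsto (fun n => ∑ q : Fin p × Fin p,
      c q.1 * c q.2 * z q.1 * (z q.1 - z q.2) * ((z q.1 * z q.2)/w)^n) Filter.atTop
      (nhds (∑ q : Fin p × Fin p, L q)) := by
    refine tendsto_finset_sum _ fun q _ => ?_
    obtain ⟨i, j⟩ := q
    by_cases hq1 : (i, j) = (i0, i1)
    · rw [Prod.mk.injEq] at hq1
      obtain ⟨rfl, rfl⟩ := hq1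
      have hLv : L (i, j) = c i * c j * z i * (z i - z j) := by
        rw [hL]
        dsimp only
        rw [if_pos rfl, if_neg, add_zero]
        intro h
        rw [Prod.mk.injEq] at h
        exact hne h.1
      rw [hLv, ← hw]
      have : (fun n : ℕ => c i * c j * z i * (z i - z j) * (w / w) ^ n)
          = fun _ : ℕ => c i * c j * z i * (z i - z j) := by
        funext n; rw [div_self hwne, one_pow, mul_one]
      rw [this]
      exact tendsto_const_nhds
    · by_cases hq2 : (i, j) = (i1, i0)
      · rw [Prod.mk.injEq] at hq2
        obtain ⟨rfl, rfl⟩ := hq2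
        have hLv : L (i, j) = c j * c i * z i * (z i - z j) := by
          rw [hL]
          dsimp only
          rw [if_neg, if_pos rfl, zero_add]
          intro h
          rw [Prod.mk.injEq] at h
          exact hne h.1.symm
        rw [hLv]
        have : (fun n : ℕ => c i * c j * z i * (z i - z j) * ((z i * z j) / w) ^ n)
            = fun _ : ℕ => c j * c i * z i * (z i - z j) := by
          funext n
          rw [mul_comm (z i) (z j), ← hw, div_self hwne, one_pow, mul_one]
          ring
        rw [this]
        exact tendsto_const_nhds
      · by_cases hq3 : i = j
        · subst hq3
          have hLv : L (i, i) = 0 := by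
            rw [hL]
            dsimp only
            rw [if_neg, if_neg, add_zero]
            · intro h; rw [Prod.mk.injEq] at h; exact hne (h.2.symm.trans h.1)
            · intro h; rw [Prod.mk.injEq] at h; exact hne (h.1.symm.trans h.2)
          rw [hLv]
          have : (fun n : ℕ => c i * c i * z i * (z i - z i) * ((z i * z i) / w) ^ n)
              = fun _ : ℕ => 0 := by
            funext n; rw [sub_self, mul_zero, zero_mul]
          rw [this]
          exact tendsto_const_nhds
        · have hLv : L (i, j) = 0 := by
            rw [hL]
            dsimp only
            rw [if_neg hq1, if_neg hq2, add_zero]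
          rw [hLv]
          have hbound : ‖z i‖ * ‖z j‖
              < ‖z i0‖ * ‖z i1‖ := by
            by_cases hi : i = i0
            · subst hi
              have hji : j ≠ i1 := fun h => hq1 (by rw [h])
              have hj0 : j ≠ i := fun h => hq3 h.symm
              exact mul_lt_mul_of_pos_left (hlt2 j hj0 hji) (norm_pos_iff.mpr (hz i))
            · by_cases hj : j = i0
              · subst hj
                have hii : i ≠ i1 := fun h => hq2 (by rw [h])
                calc ‖z i‖ * ‖z j‖
                    < ‖z i1‖ * ‖z j‖ :=
                      mul_lt_mul_of_pos_right (hlt2 i hi hii) (norm_pos_iff.mpr (hz j))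
                  _ = ‖z j‖ * ‖z i1‖ := mul_comm _ _
              · calc ‖z i‖ * ‖z j‖
                    ≤ ‖z i1‖ * ‖z i1‖ :=
                      mul_le_mul (habs i hi) (habs j hj) (norm_nonneg _)
                        (norm_nonneg _)
                  _ < ‖z i0‖ * ‖z i1‖ :=
                      mul_lt_mul_of_pos_right h10 (norm_pos_iff.mpr (hz i1))
          have hnorm : ‖z i * z j / w‖ < 1 := by
            rw [norm_div, norm_mul, hw, norm_mul,
              div_lt_one (mul_pos (norm_pos_iff.mpr (hz i0)) (norm_pos_iff.mpr (hz i1)))]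
            exact hbound
          have := tendsto_pow_atTop_nhds_zero_of_norm_lt_one hnorm
          simpa using this.const_mul (c i * c j * z i * (z i - z j))
  have hsum : (∑ q : Fin p × Fin p, L q) = c i0 * c i1 * (z i0 - z i1)^2 := by
    rw [hL]
    dsimp only
    rw [Finset.sum_add_distrib, Finset.sum_ite_eq' Finset.univ (i0, i1)
      (fun _ => c i0 * c i1 * z i0 * (z i0 - z i1)),
      Finset.sum_ite_eq' Finset.univ (i1, i0)
      (fun _ => c i0 * c i1 * z i1 * (z i1 - z i0))]
    simp only [Finset.mem_univ, if_pos]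
    ring
  rw [hsum] at hlim
  exact hlim.congr fun n => (hd n).symm


/-- In Aitken's analysis of Bernoulli's method, the first differences of the
sequence of ratios `t n = s (n+1) / s n` behave asymptotically like a geometric
sequence of ratio `z₂ / z₁`. -/
theorem aitken_first_differences_ratio_tendsto
    (p : ℕ) (hp : 3 ≤ p) (z c : Fin p → ℂ)
    (hz : ∀ i, z i ≠ 0)
    (hdec : ∀ i j : Fin p, i < j → ‖z j‖ < ‖z i‖)
    (hc0 : c ⟨0, by omega⟩ ≠ 0) (hc1 : c ⟨1, by omega⟩ ≠ 0)
    (s : ℕ → ℂ) (hs : ∀ n, s n = ∑ i, c i * z i ^ n)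
    (t : ℕ → ℂ) (ht : ∀ n, s n ≠ 0 → t n = s (n + 1) / s n) :
    (∀ᶠ n in Filter.atTop, t (n + 1) - t n ≠ 0) ∧
      Filter.Tendsto (fun n => (t (n + 2) - t (n + 1)) / (t (n + 1) - t n))
        Filter.atTop (nhds (z ⟨1, by omega⟩ / z ⟨0, by omega⟩)) := by
  have h0p : 0 < p := by omega
  have h1p : 1 < p := by omega
  set i0 : Fin p := ⟨0, h0p⟩ with hi0
  set i1 : Fin p := ⟨1, h1p⟩ with hi1
  have hc0' : c i0 ≠ 0 := hc0
  have hc1' : c i1 ≠ 0 := hc1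
  have hne : i0 ≠ i1 := by simp [hi0, hi1, Fin.ext_iff]
  have hlt01 : i0 < i1 := by simp [hi0, hi1, Fin.lt_def]
  have h10 : ‖z i1‖ < ‖z i0‖ := hdec i0 i1 hlt01
  have hltA : ∀ i, i ≠ i0 → ‖z i‖ < ‖z i0‖ := by
    intro i h
    refine hdec i0 i ?_
    have : i.val ≠ 0 := fun hv => h (Fin.ext hv)
    show (0:ℕ) < i.val
    omega
  have hlt2 : ∀ i, i ≠ i0 → i ≠ i1 → ‖z i‖ < ‖z i1‖ := by
    intro i h h'
    refine hdec i1 i ?_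
    have h1 : i.val ≠ 0 := fun hv => h (Fin.ext hv)
    have h2 : i.val ≠ 1 := fun hv => h' (Fin.ext hv)
    show (1:ℕ) < i.val
    omega
  have hS : Filter.Tendsto (fun n => s n / (z i0) ^ n) Filter.atTop (nhds (c i0)) :=
    aitken_aux_s p z c i0 (hz i0) hltA s hs
  have hD : Filter.Tendsto (fun n => (s (n+2) * s n - s (n+1)^2) / (z i0 * z i1)^n)
      Filter.atTop (nhds (c i0 * c i1 * (z i0 - z i1)^2)) :=
    aitken_aux_d p z c i0 i1 hz hne h10 hlt2 s hs
  have hzz : z i0 ≠ z i1 := by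
    intro h
    rw [h] at h10
    exact lt_irrefl _ h10
  have hKne : c i0 * c i1 * (z i0 - z i1)^2 ≠ 0 :=
    mul_ne_zero (mul_ne_zero hc0' hc1') (pow_ne_zero _ (sub_ne_zero.mpr hzz))
  have hwne : z i0 * z i1 ≠ 0 := mul_ne_zero (hz i0) (hz i1)
  -- eventual nonvanishing
  have hsne : ∀ᶠ n in Filter.atTop, s n ≠ 0 := by
    filter_upwards [hS.eventually_ne hc0'] with n hn
    intro h
    rw [h, zero_div] at hn
    exact hn rfl
  have hdne : ∀ᶠ n in Filter.atTop, s (n+2) * s n - s (n+1)^2 ≠ 0 := by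
    filter_upwards [hD.eventually_ne hKne] with n hn
    intro h
    rw [h, zero_div] at hn
    exact hn rfl
  obtain ⟨N1, hN1⟩ := Filter.eventually_atTop.1 hsne
  obtain ⟨N2, hN2⟩ := Filter.eventually_atTop.1 hdne
  set N := max N1 N2 with hN
  have hsN : ∀ n, N ≤ n → s n ≠ 0 := fun n hn => hN1 n (le_trans (le_max_left _ _) hn)
  have hdN : ∀ n, N ≤ n → s (n+2) * s n - s (n+1)^2 ≠ 0 :=
    fun n hn => hN2 n (le_trans (le_max_right _ _) hn)
  have tdiff : ∀ n, s n ≠ 0 → s (n+1) ≠ 0 →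
      t (n+1) - t n = (s (n+2) * s n - s (n+1)^2) / (s (n+1) * s n) := by
    intro n h1 h2
    rw [ht (n+1) h2, ht n h1, div_sub_div _ _ h2 h1, sq]
  constructor
  · rw [Filter.eventually_atTop]
    refine ⟨N, fun n hn => ?_⟩
    rw [tdiff n (hsN n hn) (hsN (n+1) (by omega))]
    exact div_ne_zero (hdN n hn) (mul_ne_zero (hsN (n+1) (by omega)) (hsN n hn))
  · have hS2 : Filter.Tendsto (fun n => s (n+2) / (z i0) ^ (n+2)) Filter.atTop
        (nhds (c i0)) := hS.comp (Filter.tendsto_add_atTop_nat 2)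
    have hD1 : Filter.Tendsto
        (fun n => (s (n+3) * s (n+1) - s (n+2)^2) / (z i0 * z i1)^(n+1)) Filter.atTop
        (nhds (c i0 * c i1 * (z i0 - z i1)^2)) := hD.comp (Filter.tendsto_add_atTop_nat 1)
    have hG : Filter.Tendsto (fun n =>
        ((s (n+3) * s (n+1) - s (n+2)^2) / (z i0 * z i1)^(n+1)
          / ((s (n+2) * s n - s (n+1)^2) / (z i0 * z i1)^n))
        * ((s n / (z i0)^n) / (s (n+2) / (z i0)^(n+2)))
        * (z i1 / z i0)) Filter.atTop
        (nhds ((c i0 * c i1 * (z i0 - z i1)^2) / (c i0 * c i1 * (z i0 - z i1)^2)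
          * ((c i0) / (c i0)) * (z i1 / z i0))) :=
      ((hD1.div hD hKne).mul (hS.div hS2 hc0')).mul tendsto_const_nhds
    rw [div_self hKne, div_self hc0', one_mul, one_mul] at hG
    refine hG.congr' ?_
    filter_upwards [Filter.eventually_ge_atTop N] with n hn
    have hs0 := hsN n hn
    have hs1 := hsN (n+1) (by omega)
    have hs2 := hsN (n+2) (by omega)
    have hd0 := hdN n hn
    have hd1 := hdN (n+1) (by omega)
    have e1 : t (n+2) - t (n+1) = (s (n+3) * s (n+1) - s (n+2)^2) / (s (n+2) * s (n+1)) := by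
      have := tdiff (n+1) hs1 hs2
      convert this using 3 <;> ring_nf
    have e2 : t (n+1) - t n = (s (n+2) * s n - s (n+1)^2) / (s (n+1) * s n) :=
      tdiff n hs0 hs1
    rw [e1, e2]
    have hz0 : z i0 ≠ 0 := hz i0
    have hz1 : z i1 ≠ 0 := hz i1
    have hd1' : s (n+3) * s (n+1) - s (n+2)^2 ≠ 0 := hd1
    set A := s (n+3) * s (n+1) - s (n+2)^2 with hA
    set B := s (n+2) * s n - s (n+1)^2 with hB
    clear_value A B
    field_simp
    have hn1 : N1 ≤ n := le_trans (le_max_left _ _) hn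
    ring
end

section
/- Let (x_n) be a sequence of real numbers converging to a limit L with x_n ≠ L for all n, and suppose (x_{n+1} − L)/(x_n − L) converges to some real number λ with |λ| < 1. Then for all sufficiently large n the second difference x_n − 2x_{n+1} + x_{n+2} is nonzero, and the Aitken Δ² transform t_n = (x_n x_{n+2} − x_{n+1}²)/(x_n − 2x_{n+1} + x_{n+2}) satisfies (t_n − L)/(x_n − L) → 0 as n → ∞; in particular t_n converges to L faster than x_n does. -/
/-- The Aitken Δ² process accelerates linearly convergent sequences: if
`(x (n+1) - L) / (x n - L) → λ` with `|λ| < 1`, then the second differences are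
eventually nonzero and the Aitken transform `t n` satisfies
`(t n - L) / (x n - L) → 0`. -/
theorem aitken_delta_sq_accelerates
    (x : ℕ → ℝ) (L l : ℝ)
    (hlim : Filter.Tendsto x Filter.atTop (nhds L))
    (hx : ∀ n, x n ≠ L)
    (hratio : Filter.Tendsto (fun n => (x (n + 1) - L) / (x n - L))
      Filter.atTop (nhds l))
    (hl : |l| < 1) :
    (∀ᶠ n in Filter.atTop, x n - 2 * x (n + 1) + x (n + 2) ≠ 0) ∧
      Filter.Tendsto
        (fun n =>
          ((x n * x (n + 2) - (x (n + 1)) ^ 2) / (x n - 2 * x (n + 1) + x (n + 2)) - L)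
            / (x n - L))
        Filter.atTop (nhds 0) := by
  set r : ℕ → ℝ := fun n => (x (n + 1) - L) / (x n - L) with hrdef
  have he0 : ∀ n, x n - L ≠ 0 := fun n => sub_ne_zero.mpr (hx n)
  have hrec : ∀ n, x (n + 1) - L = (x n - L) * r n := by
    intro n
    simp only [hrdef]
    rw [mul_div_cancel₀ _ (he0 n)]
  have hr1 : Filter.Tendsto (fun n => r (n + 1)) Filter.atTop (nhds l) := by
    exact hratio.comp (Filter.tendsto_add_atTop_nat 1)
  set g : ℕ → ℝ := fun n => 1 - 2 * r n + r n * r (n + 1) with hgdef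
  have hgl : Filter.Tendsto g Filter.atTop (nhds ((1 - l) ^ 2)) := by
    have h : (1 - l) ^ 2 = 1 - 2 * l + l * l := by ring
    rw [h]
    exact (tendsto_const_nhds.sub (hratio.const_mul 2)).add (hratio.mul hr1)
  have hl1 : (1 - l) ^ 2 ≠ 0 := by
    have : l ≠ 1 := by
      intro h; rw [h] at hl; norm_num at hl
    exact pow_ne_zero _ (sub_ne_zero.mpr (Ne.symm this))
  have hgne : ∀ᶠ n in Filter.atTop, g n ≠ 0 := hgl.eventually_ne hl1
  have hD : ∀ n, x n - 2 * x (n + 1) + x (n + 2) = (x n - L) * g n := by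
    intro n
    have h1 := hrec n
    have h2 := hrec (n + 1)
    simp only [hgdef]
    linear_combination (r (n + 1) - 2) * h1 + h2
  constructor
  · filter_upwards [hgne] with n hg0
    rw [hD n]
    exact mul_ne_zero (he0 n) hg0
  · have key : (fun n =>
        ((x n * x (n + 2) - (x (n + 1)) ^ 2) / (x n - 2 * x (n + 1) + x (n + 2)) - L)
          / (x n - L))
        =ᶠ[Filter.atTop] fun n => r n * (r (n + 1) - r n) / g n := by
      filter_upwards [hgne] with n hg0
      have h1 := hrec n
      have h2 := hrec (n + 1)
      have hx2 : x (n + 2) = L + (x n - L) * r n * r (n + 1) := by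
        linear_combination h2 + r (n + 1) * h1
      have hx1 : x (n + 1) = L + (x n - L) * r n := by linarith
      obtain ⟨a, ha0, hxa⟩ : ∃ a : ℝ, a ≠ 0 ∧ x n = L + a :=
        ⟨x n - L, he0 n, by ring⟩
      rw [hD n, hx2, hx1, hxa]
      have hg0' : 1 - 2 * r n + r n * r (n + 1) ≠ 0 := hg0
      simp only [hgdef]
      rw [show L + a - L = a by ring]
      rw [div_sub' (mul_ne_zero ha0 hg0'), div_div, div_eq_div_iff (mul_ne_zero (mul_ne_zero ha0 hg0') ha0) hg0']
      ring
    rw [Filter.tendsto_congr' key]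
    have := (hratio.mul (hr1.sub hratio)).div hgl hl1
    rw [sub_self, mul_zero, zero_div] at this
    exact this
end

section
/- There exists exactly one differentiable function y : [0, ∞) → ℝ satisfying the differential equation y'(x) = 2·y(x)²·(y(x) − x) for all x ≥ 0 together with the trapping conditions x < y(x) and 2·y(x)²·(y(x) − x) < 1 for all x ≥ 0; moreover this solution satisfies y(x) − x → 0 as x → ∞. -/
open Set Filter Real

namespace LemAF

noncomputable section

/-- the vector field -/
def fv (t y : ℝ) : ℝ := 2 * y ^ 2 * (y - t)

/-- clamp -/
def cl (t y : ℝ) : ℝ := max (-1) (min y (t + 1))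

/-- clamped field -/
def fc (t y : ℝ) : ℝ := fv t (cl t y)

lemma cl_eq (t y : ℝ) (h1 : -1 ≤ y) (h2 : y ≤ t + 1) : cl t y = y := by
  unfold cl; rw [min_eq_left h2, max_eq_right h1]

lemma cl_lip (t y z : ℝ) : |cl t y - cl t z| ≤ |y - z| := by
  unfold cl
  rw [max_comm (-1) (min y (t+1)), max_comm (-1) (min z (t+1))]
  refine le_trans (abs_max_sub_max_le_abs _ _ _) ?_
  refine le_trans (abs_min_sub_min_le_max y (t+1) z (t+1)) ?_
  simp

lemma cl_bounds (t y : ℝ) (ht : 0 ≤ t) : -1 ≤ cl t y ∧ cl t y ≤ t + 1 := by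
  constructor
  · exact le_max_left _ _
  · exact max_le (by linarith) (min_le_right _ _)

/-- generic: stay above threshold -/
lemma stay_above {v d : ℝ → ℝ} {x₀ c : ℝ}
    (hd : ∀ x ∈ Ici x₀, HasDerivWithinAt v (d x) (Ici x₀) x)
    (hpos : ∀ x ∈ Ici x₀, c ≤ v x → 0 < d x)
    (h₀ : c < v x₀) : ∀ x ∈ Ici x₀, c < v x := by
  intro x₁ hx₁
  by_contra hle
  push_neg at hle
  have hcont : ContinuousOn v (Ici x₀) := fun x hx => (hd x hx).continuousWithinAt
  set S := Icc x₀ x₁ ∩ v ⁻¹' Iic c with hS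
  have hScl : IsClosed S :=
    ContinuousOn.preimage_isClosed_of_isClosed (hcont.mono Icc_subset_Ici_self)
      isClosed_Icc isClosed_Iic
  have hSne : S.Nonempty := ⟨x₁, ⟨hx₁, le_rfl⟩, hle⟩
  have hSbd : BddBelow S := ⟨x₀, fun x hx => hx.1.1⟩
  set x₂ := sInf S with hx₂
  have hx₂S : x₂ ∈ S := hScl.csInf_mem hSne hSbd
  have hx₂0 : x₀ < x₂ := by
    rcases lt_or_eq_of_le hx₂S.1.1 with h | h
    · exact h
    · exact absurd hx₂S.2 (by rw [← h]; simpa using h₀.not_ge)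
  have hlt : ∀ x ∈ Ico x₀ x₂, c < v x := by
    intro x hx
    by_contra hxc
    push_neg at hxc
    have : x ∈ S := ⟨⟨hx.1, hx.2.le.trans hx₂S.1.2⟩, hxc⟩
    exact absurd (csInf_le hSbd this) (not_le.mpr hx.2)
  have hmono : StrictMonoOn v (Icc x₀ x₂) := by
    apply strictMonoOn_of_deriv_pos (convex_Icc _ _)
    · exact hcont.mono (Icc_subset_Ici_self)
    · intro x hx
      rw [interior_Icc] at hx
      have hda : HasDerivAt v (d x) x :=
        (hd x (le_of_lt hx.1)).hasDerivAt (Ici_mem_nhds hx.1)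
      rw [hda.deriv]
      exact hpos x (le_of_lt hx.1) (le_of_lt (hlt x ⟨hx.1.le, hx.2⟩))
  have := hmono (left_mem_Icc.mpr hx₂0.le) (right_mem_Icc.mpr hx₂0.le) hx₂0
  have := hx₂S.2
  simp only [mem_preimage, mem_Iic] at this
  linarith

lemma stay_below {v d : ℝ → ℝ} {x₀ c : ℝ}
    (hd : ∀ x ∈ Ici x₀, HasDerivWithinAt v (d x) (Ici x₀) x)
    (hneg : ∀ x ∈ Ici x₀, v x ≤ c → d x < 0)
    (h₀ : v x₀ < c) : ∀ x ∈ Ici x₀, v x < c := by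
  have := stay_above (v := fun x => -v x) (d := fun x => -d x) (x₀ := x₀) (c := -c)
    (fun x hx => (hd x hx).neg)
    (fun x hx h => by
      simp only [neg_pos]
      exact hneg x hx (by simp only [neg_le_neg_iff] at h; linarith [h]))
    (by simpa using h₀)
  intro x hx
  have h2 := this x hx
  simp only [neg_lt_neg_iff] at h2
  linarith [h2]

/-- derivative positive at a point pushes value strictly above just after -/
lemma exists_gt_of_deriv_pos {v : ℝ → ℝ} {x₁ r c : ℝ}
    (hd : HasDerivWithinAt v r (Ici x₁) x₁) (hr : 0 < r) (hv : v x₁ = c) :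
    ∃ x, x₁ < x ∧ c < v x := by
  have h := hasDerivWithinAt_iff_tendsto_slope.mp hd
  have hIoi : Ici x₁ \ {x₁} = Ioi x₁ := by
    ext z; simp [mem_diff, lt_iff_le_and_ne, and_comm, eq_comm]
  rw [hIoi] at h
  have hev : ∀ᶠ z in nhdsWithin x₁ (Ioi x₁), 0 < slope v x₁ z :=
    h.eventually_const_lt hr
  obtain ⟨z, hz, hz2⟩ := (hev.and self_mem_nhdsWithin).exists
  refine ⟨z, hz2, ?_⟩
  rw [slope_def_field] at hz
  have hzx : 0 < z - x₁ := by simpa [sub_pos] using hz2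
  have := mul_pos hz hzx
  rw [div_mul_cancel₀] at this
  · linarith [hv ▸ this]
  · exact ne_of_gt hzx



def lipC (N : ℝ) : NNReal := Real.toNNReal (10 * (N + 1) ^ 2)
def bndC (N : ℝ) : ℝ := 2 * (N + 1) ^ 2 * (2 * N + 1)

lemma lipC_coe (N : ℝ) (hN : 0 ≤ N) : (lipC N : ℝ) = 10 * (N + 1) ^ 2 := by
  rw [lipC, Real.coe_toNNReal]; nlinarith

lemma fc_lip {N : ℝ} (hN : 0 ≤ N) {t : ℝ} (ht : t ∈ Icc 0 N) :
    LipschitzWith (lipC N) (fc t) := by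
  apply LipschitzWith.of_dist_le_mul
  intro y z
  rw [Real.dist_eq, Real.dist_eq, lipC_coe N hN]
  obtain ⟨ht0, htN⟩ := ht
  set c1 := cl t y with hc1
  set c2 := cl t z with hc2
  obtain ⟨hb1, hb2⟩ := cl_bounds t y ht0
  obtain ⟨hb3, hb4⟩ := cl_bounds t z ht0
  rw [← hc1] at hb1 hb2; rw [← hc2] at hb3 hb4
  have hlc : |c1 - c2| ≤ |y - z| := cl_lip t y z
  have hid : fc t y - fc t z =
      (c1 - c2) * (2 * (c1 ^ 2 + c1 * c2 + c2 ^ 2) - 2 * t * (c1 + c2)) := by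
    simp only [fc, fv, ← hc1, ← hc2]; ring
  rw [hid, abs_mul]
  have hbr : |2 * (c1 ^ 2 + c1 * c2 + c2 ^ 2) - 2 * t * (c1 + c2)| ≤ 10 * (N + 1) ^ 2 := by
    rw [abs_le]
    constructor <;> nlinarith [sq_nonneg (c1 + c2), sq_nonneg (c1 - c2), sq_nonneg (c1 + c2 - 2*t),
      sq_nonneg c1, sq_nonneg c2]
  calc |c1 - c2| * |2 * (c1 ^ 2 + c1 * c2 + c2 ^ 2) - 2 * t * (c1 + c2)|
      ≤ |y - z| * (10 * (N + 1) ^ 2) :=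
        mul_le_mul hlc hbr (abs_nonneg _) (abs_nonneg _)
    _ = 10 * (N + 1) ^ 2 * |y - z| := by ring

lemma fc_bound {N : ℝ} (hN : 0 ≤ N) {t : ℝ} (ht : t ∈ Icc 0 N) (y : ℝ) :
    |fc t y| ≤ bndC N := by
  obtain ⟨ht0, htN⟩ := ht
  obtain ⟨hb1, hb2⟩ := cl_bounds t y ht0
  set c := cl t y
  rw [fc, fv, bndC, abs_le]
  constructor <;> nlinarith [sq_nonneg c, sq_nonneg (c - t), sq_nonneg (c + 1), sq_nonneg (c - N - 1)]

lemma fc_cont_t (y : ℝ) : Continuous (fun t => fc t y) := by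
  unfold fc fv cl
  fun_prop

lemma bndC_nonneg {N : ℝ} (hN : 0 ≤ N) : 0 ≤ bndC N := by
  rw [bndC]; nlinarith

/-- Existence on `[0, N]`. -/
lemma solN (a : ℝ) {N : ℝ} (hN : 0 ≤ N) :
    ∃ y : ℝ → ℝ, y 0 = a ∧ ∀ t ∈ Icc (0:ℝ) N,
      HasDerivWithinAt y (fc t (y t)) (Icc (0:ℝ) N) t := by
  have hPL : IsPicardLindelof fc (tmin := 0) (tmax := N) ⟨0, le_rfl, hN⟩ a
      (Real.toNNReal (bndC N * N)) 0 (Real.toNNReal (bndC N)) (lipC N) :=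
    { lipschitzOnWith := fun t ht => (fc_lip hN ht).lipschitzOnWith
      continuousOn := fun x _ => (fc_cont_t x).continuousOn
      norm_le := fun t ht x _ => by
        rw [Real.norm_eq_abs, Real.coe_toNNReal _ (bndC_nonneg hN)]; exact fc_bound hN ht x
      mul_max_le := by
        simp only [Real.coe_toNNReal _ (bndC_nonneg hN),
          Real.coe_toNNReal _ (mul_nonneg (bndC_nonneg hN) hN), NNReal.coe_zero, sub_zero, sub_self]
        rw [max_eq_left hN] }
  exact hPL.exists_eq_forall_mem_Icc_hasDerivWithinAt₀

/-- Uniqueness on `[0, N]`. -/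
lemma uniqN {N : ℝ} (hN : 0 ≤ N) {y z : ℝ → ℝ}
    (hy : ∀ t ∈ Icc (0:ℝ) N, HasDerivWithinAt y (fc t (y t)) (Icc (0:ℝ) N) t)
    (hz : ∀ t ∈ Icc (0:ℝ) N, HasDerivWithinAt z (fc t (z t)) (Icc (0:ℝ) N) t)
    (h0 : y 0 = z 0) : EqOn y z (Icc 0 N) := by
  have hmem : ∀ t ∈ Ico (0:ℝ) N, Icc (0:ℝ) N ∈ nhdsWithin t (Ici t) := by
    intro t ht
    exact mem_nhdsWithin.mpr ⟨Iio N, isOpen_Iio, ht.2,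
      fun z hz => ⟨ht.1.trans hz.2, hz.1.le⟩⟩
  apply ODE_solution_unique_of_mem_Icc_right (v := fc)
    (s := fun t => if t ∈ Icc (0:ℝ) N then (univ : Set ℝ) else ∅) (K := lipC N)
  · intro t _
    by_cases h : t ∈ Icc (0:ℝ) N
    · rw [if_pos h]; exact (fc_lip hN h).lipschitzOnWith
    · rw [if_neg h]; exact lipschitzOnWith_empty _ _
  · exact fun t ht => (hy t ht).continuousWithinAt
  · exact fun t ht => (hy t ⟨ht.1, ht.2.le⟩).mono_of_mem_nhdsWithin (hmem t ht)
  · intro t ht; rw [if_pos ⟨ht.1, ht.2.le⟩]; trivial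
  · exact fun t ht => (hz t ht).continuousWithinAt
  · exact fun t ht => (hz t ⟨ht.1, ht.2.le⟩).mono_of_mem_nhdsWithin (hmem t ht)
  · intro t ht; rw [if_pos ⟨ht.1, ht.2.le⟩]; trivial
  · exact h0

/-- Continuous dependence. -/
lemma depN {N : ℝ} (hN : 0 ≤ N) {y z : ℝ → ℝ}
    (hy : ∀ t ∈ Ici (0:ℝ), HasDerivWithinAt y (fc t (y t)) (Ici (0:ℝ)) t)
    (hz : ∀ t ∈ Ici (0:ℝ), HasDerivWithinAt z (fc t (z t)) (Ici (0:ℝ)) t) :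
    ∀ t ∈ Icc (0:ℝ) N, dist (y t) (z t) ≤ dist (y 0) (z 0) * Real.exp (lipC N * t) := by
  intro t ht
  have := dist_le_of_trajectories_ODE_of_mem (v := fc)
    (s := fun t => if t ∈ Icc (0:ℝ) N then (univ : Set ℝ) else ∅) (K := lipC N)
    (a := 0) (b := N) (δ := dist (y 0) (z 0))
    (fun t _ => by
      show LipschitzOnWith _ _ (if t ∈ Icc (0:ℝ) N then (univ : Set ℝ) else ∅)
      by_cases h : t ∈ Icc (0:ℝ) N
      · rw [if_pos h]; exact (fc_lip hN h).lipschitzOnWith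
      · rw [if_neg h]; exact lipschitzOnWith_empty _ _)
    (fun t ht => ((hy t ht.1).continuousWithinAt).mono Icc_subset_Ici_self)
    (fun t ht => (hy t ht.1).mono (Ici_subset_Ici.mpr ht.1))
    (fun t ht => by
      show y t ∈ (if t ∈ Icc (0:ℝ) N then (univ : Set ℝ) else ∅)
      rw [if_pos ⟨ht.1, ht.2.le⟩]; trivial)
    (fun t ht => ((hz t ht.1).continuousWithinAt).mono Icc_subset_Ici_self)
    (fun t ht => (hz t ht.1).mono (Ici_subset_Ici.mpr ht.1))
    (fun t ht => by
      show z t ∈ (if t ∈ Icc (0:ℝ) N then (univ : Set ℝ) else ∅)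
      rw [if_pos ⟨ht.1, ht.2.le⟩]; trivial)
    le_rfl t ht
  rwa [sub_zero] at this



lemma exists_global (a : ℝ) : ∃ y : ℝ → ℝ, y 0 = a ∧
    ∀ x ∈ Ici (0:ℝ), HasDerivWithinAt y (fc x (y x)) (Ici (0:ℝ)) x := by
  choose F hF0 hFd using fun n : ℕ => solN a (Nat.cast_nonneg n)
  have hres : ∀ (n k : ℕ), k ≤ n → ∀ t ∈ Icc (0:ℝ) k,
      HasDerivWithinAt (F n) (fc t (F n t)) (Icc (0:ℝ) k) t := by
    intro n k hkn t ht
    exact (hFd n t (Icc_subset_Icc_right (by exact_mod_cast hkn) ht)).mono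
      (Icc_subset_Icc_right (by exact_mod_cast hkn))
  have hagree : ∀ (m n : ℕ) (x : ℝ), x ∈ Icc (0:ℝ) m → x ∈ Icc (0:ℝ) n →
      F m x = F n x := by
    intro m n x hxm hxn
    have hk : x ∈ Icc (0:ℝ) (min m n : ℕ) := by
      simp only [Nat.cast_min, mem_Icc, le_min_iff]
      exact ⟨hxm.1, hxm.2, hxn.2⟩
    exact uniqN (Nat.cast_nonneg _)
      (hres m _ (min_le_left _ _)) (hres n _ (min_le_right _ _))
      ((hF0 m).trans (hF0 n).symm) hk
  refine ⟨fun x => F (⌊x⌋₊ + 1) x, ?_, ?_⟩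
  · simpa using hF0 1
  · intro x hx
    set n := ⌊x⌋₊ + 1 with hn
    have hxn : x < (n : ℝ) := by exact_mod_cast Nat.lt_floor_add_one x
    have hxIcc : x ∈ Icc (0:ℝ) n := ⟨hx, hxn.le⟩
    have hyeq : ∀ z ∈ Icc (0:ℝ) (n:ℝ), F (⌊z⌋₊ + 1) z = F n z := by
      intro z hz
      exact hagree _ n z ⟨hz.1, (Nat.lt_floor_add_one z).le.trans (le_refl _) |>.trans
        (by exact_mod_cast le_rfl)⟩ hz
    have h1 : HasDerivWithinAt (fun z => F (⌊z⌋₊ + 1) z) (fc x (F n x)) (Icc (0:ℝ) n) x :=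
      (hFd n x hxIcc).congr hyeq (hyeq x hxIcc)
    have h2 : HasDerivWithinAt (fun z => F (⌊z⌋₊ + 1) z) (fc x (F n x)) (Ici (0:ℝ)) x :=
      h1.mono_of_mem_nhdsWithin (mem_nhdsWithin.mpr
        ⟨Iio (n:ℝ), isOpen_Iio, hxn, fun z hz => ⟨hz.2, hz.1.le⟩⟩)
    have := hyeq x hxIcc
    simp only []
    rwa [this]

lemma uniq_global {y z : ℝ → ℝ}
    (hy : ∀ x ∈ Ici (0:ℝ), HasDerivWithinAt y (fc x (y x)) (Ici (0:ℝ)) x)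
    (hz : ∀ x ∈ Ici (0:ℝ), HasDerivWithinAt z (fc x (z x)) (Ici (0:ℝ)) x)
    (h0 : y 0 = z 0) : ∀ x ∈ Ici (0:ℝ), y x = z x := by
  intro x hx
  exact uniqN hx
    (fun t ht => (hy t ht.1).mono Icc_subset_Ici_self)
    (fun t ht => (hz t ht.1).mono Icc_subset_Ici_self)
    h0 (right_mem_Icc.mpr hx)



variable {y : ℝ → ℝ}

/-- fc at points below the line -/
lemma fc_nonpos {x : ℝ} (hx : 0 ≤ x) {w : ℝ} (hw : w ≤ x) : fc x w ≤ 0 := by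
  have hcx : cl x w ≤ x := max_le (by linarith) ((min_le_left _ _).trans hw)
  rw [fc, fv]
  nlinarith [sq_nonneg (cl x w)]

/-- fc at points on/above the upper isocline -/
lemma fc_ge_one {x w : ℝ} (hx : 0 ≤ x) (hfv : 1 ≤ fv x w) : 1 ≤ fc x w := by
  have hwx : x < w := by
    rw [fv] at hfv
    by_contra h
    push_neg at h
    nlinarith [sq_nonneg w]
  have hw0 : 0 < w := lt_of_le_of_lt hx hwx
  have hcl : cl x w = min w (x + 1) := by
    rw [cl, max_eq_right]
    exact le_min (by linarith) (by linarith)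
  rcases le_or_gt w (x + 1) with h | h
  · rw [fc, hcl, min_eq_left h]; exact hfv
  · rw [fc, hcl, min_eq_right h.le, fv]
    nlinarith

lemma below_invariant
    (hy : ∀ x ∈ Ici (0:ℝ), HasDerivWithinAt y (fc x (y x)) (Ici (0:ℝ)) x)
    {x₁ : ℝ} (hx₁ : 0 ≤ x₁) (h : y x₁ < x₁) : ∀ x, x₁ ≤ x → y x < x := by
  intro x hx
  have := stay_below (v := fun x => y x - x) (d := fun x => fc x (y x) - 1) (x₀ := x₁) (c := 0)
    (fun x hx => by
      have := ((hy x (hx₁.trans hx)).mono (Ici_subset_Ici.mpr hx₁)).sub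
        (hasDerivWithinAt_id x (Ici x₁))
      exact this)
    (fun x hx hle => by
      have h0x : (0:ℝ) ≤ x := hx₁.trans hx
      have := fc_nonpos h0x (w := y x) (by simpa [sub_nonpos] using hle)
      show fc x (y x) - 1 < 0
      linarith)
    (by simpa [sub_neg] using h) x hx
  simpa [sub_neg] using this

lemma hasDeriv_phi
    (hy : ∀ x ∈ Ici (0:ℝ), HasDerivWithinAt y (fc x (y x)) (Ici (0:ℝ)) x)
    {x : ℝ} (hx : x ∈ Ici (0:ℝ)) :
    HasDerivWithinAt (fun x => 2 * y x ^ 2 * (y x - x))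
      ((6 * y x ^ 2 - 4 * x * y x) * fc x (y x) - 2 * y x ^ 2) (Ici (0:ℝ)) x := by
  have h := hy x hx
  have h1 := ((h.pow 2).const_mul (2:ℝ)).mul (h.sub (hasDerivWithinAt_id x _))
  convert h1 using 1
  · rfl
  · rfl
  · funext t; simp only [Pi.mul_apply, Pi.sub_apply, Pi.pow_apply, id_eq]
  · simp only [Pi.sub_apply, Pi.pow_apply, id_eq, Nat.cast_ofNat, show (2:ℕ) - 1 = 1 from rfl, pow_one]
    ring

lemma above_invariant
    (hy : ∀ x ∈ Ici (0:ℝ), HasDerivWithinAt y (fc x (y x)) (Ici (0:ℝ)) x)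
    {x₂ : ℝ} (hx₂ : 0 ≤ x₂) (h : 1 < 2 * y x₂ ^ 2 * (y x₂ - x₂)) :
    ∀ x, x₂ ≤ x → 1 < 2 * y x ^ 2 * (y x - x) := by
  intro x hx
  refine stay_above (v := fun x => 2 * y x ^ 2 * (y x - x))
    (d := fun x => (6 * y x ^ 2 - 4 * x * y x) * fc x (y x) - 2 * y x ^ 2) (x₀ := x₂) (c := 1)
    (fun x hx => (hasDeriv_phi hy (hx₂.trans hx)).mono (Ici_subset_Ici.mpr hx₂))
    ?_ h x hx
  intro x hxx hphi
  beta_reduce at hphi ⊢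
  have h0x : (0:ℝ) ≤ x := hx₂.trans hxx
  have hyx : x < y x := by
    by_contra hc
    push_neg at hc
    nlinarith [sq_nonneg (y x)]
  have hy0 : 0 < y x := lt_of_le_of_lt h0x hyx
  have hfc : 1 ≤ fc x (y x) := fc_ge_one h0x (by rw [fv]; exact hphi)
  have hcoef : 0 < 6 * y x ^ 2 - 4 * x * y x := by nlinarith
  nlinarith [mul_le_mul_of_nonneg_left hfc hcoef.le]



lemma exists_lt_of_deriv_neg {v : ℝ → ℝ} {x₁ r c : ℝ}
    (hd : HasDerivWithinAt v r (Ici x₁) x₁) (hr : r < 0) (hv : v x₁ = c) :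
    ∃ x, x₁ < x ∧ v x < c := by
  obtain ⟨x, hx1, hx2⟩ := exists_gt_of_deriv_pos hd.neg (by linarith)
    (c := -c) (by simp [hv])
  exact ⟨x, hx1, by simpa using hx2⟩

/-- comparison of two trapped solutions -/
lemma trapped_cmp {u w : ℝ → ℝ}
    (hu : ∀ x ∈ Ici (0:ℝ), HasDerivWithinAt u (2 * u x ^ 2 * (u x - x)) (Ici (0:ℝ)) x ∧
      x < u x ∧ 2 * u x ^ 2 * (u x - x) < 1)
    (hw : ∀ x ∈ Ici (0:ℝ), HasDerivWithinAt w (2 * w x ^ 2 * (w x - x)) (Ici (0:ℝ)) x ∧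
      x < w x ∧ 2 * w x ^ 2 * (w x - x) < 1)
    {x₀ : ℝ} (hx₀ : 0 ≤ x₀) (h : u x₀ < w x₀) : False := by
  set ε := w x₀ - u x₀ with hε
  have hε0 : 0 < ε := by simp [hε]; linarith
  have key : ∀ x ∈ Ici x₀, ε / 2 < w x - u x := by
    apply stay_above (d := fun x => 2 * w x ^ 2 * (w x - x) - 2 * u x ^ 2 * (u x - x))
    · intro x hx
      exact (((hw x (hx₀.trans hx)).1).mono (Ici_subset_Ici.mpr hx₀)).sub
        (((hu x (hx₀.trans hx)).1).mono (Ici_subset_Ici.mpr hx₀))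
    · intro x hx hge
      have h0x : (0:ℝ) ≤ x := hx₀.trans hx
      obtain ⟨-, hu1, -⟩ := hu x h0x
      obtain ⟨-, hw1, -⟩ := hw x h0x
      have h1 : 0 < w x - u x := lt_of_lt_of_le (by linarith) hge
      have h2 : 0 < w x * (w x - x) + u x * (u x - x) + w x * u x := by
        have hw0 : 0 < w x := lt_of_le_of_lt h0x hw1
        have hu0 : 0 < u x := lt_of_le_of_lt h0x hu1
        nlinarith [mul_pos hw0 (sub_pos.mpr hw1), mul_pos hu0 (sub_pos.mpr hu1),
          mul_pos hw0 hu0]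
      nlinarith [mul_pos h1 h2]
    · linarith
  -- pick large X
  set X := max x₀ (max 1 (1/ε)) with hX
  have hXx₀ : x₀ ≤ X := le_max_left _ _
  have hX1 : (1:ℝ) ≤ X := le_trans (le_max_left _ _) (le_max_right _ _)
  have hXε : 1/ε ≤ X := le_trans (le_max_right _ _) (le_max_right _ _)
  have hX0 : (0:ℝ) ≤ X := by linarith
  obtain ⟨-, huX, -⟩ := hu X hX0
  obtain ⟨-, hwX, hwX2⟩ := hw X hX0
  have hgt := key X hXx₀
  -- derive w X - u X ≤ ε/2
  have hb1 : w X - X ≤ 1 / (2 * X ^ 2) := by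
    rw [le_div_iff₀ (by nlinarith)]
    nlinarith [sq_nonneg (w X - X), sq_nonneg (w X + X)]
  have hb2 : 1 / (2 * X ^ 2) ≤ ε / 2 := by
    rw [div_le_div_iff₀ (by nlinarith) (by norm_num)]
    have hXe : 1 ≤ ε * X := by
      calc (1:ℝ) = ε * (1/ε) := by field_simp
        _ ≤ ε * X := mul_le_mul_of_nonneg_left hXε hε0.le
    nlinarith
  linarith



end

end LemAF

open LemAF in
/-- Lemaître's anti-funnel: there is exactly one differentiable function on
`[0, ∞)` satisfying `y' = 2 y² (y - x)` and trapped between the isocline of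
slope 0 (the line `y = x`) and the isocline of slope 1 (the curve
`2 y² (y - x) = 1`); moreover this solution satisfies `y x - x → 0` as
`x → ∞`. -/
theorem lemaitre_antifunnel_unique_solution :
    ∃ y : ℝ → ℝ,
      (∀ x ∈ Set.Ici (0 : ℝ),
          HasDerivWithinAt y (2 * y x ^ 2 * (y x - x)) (Set.Ici (0 : ℝ)) x ∧
            x < y x ∧ 2 * y x ^ 2 * (y x - x) < 1) ∧
        (∀ z : ℝ → ℝ,
          (∀ x ∈ Set.Ici (0 : ℝ),
              HasDerivWithinAt z (2 * z x ^ 2 * (z x - x)) (Set.Ici (0 : ℝ)) x ∧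
                x < z x ∧ 2 * z x ^ 2 * (z x - x) < 1) →
            Set.EqOn z y (Set.Ici (0 : ℝ))) ∧
        Filter.Tendsto (fun x => y x - x) Filter.atTop (nhds 0) := by
  classical
  choose Y hY0 hYd using exists_global
  set A : Set ℝ := {a | ∃ x, 0 ≤ x ∧ Y a x < x} with hA
  set B : Set ℝ := {a | ∃ x, 0 ≤ x ∧ 1 < 2 * Y a x ^ 2 * (Y a x - x)} with hB
  -- openness of A
  have hAopen : IsOpen A := by
    rw [Metric.isOpen_iff]
    rintro a ⟨x₁, hx₁0, hx₁⟩
    set N := x₁ + 1 with hN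
    refine ⟨(x₁ - Y a x₁) / Real.exp (lipC N * x₁),
      div_pos (by linarith) (Real.exp_pos _), ?_⟩
    intro b hb
    rw [Metric.mem_ball] at hb
    have hdep := depN (N := N) (by linarith) (hYd b) (hYd a) x₁ ⟨hx₁0, by linarith⟩
    rw [hY0, hY0] at hdep
    have : dist (Y b x₁) (Y a x₁) < x₁ - Y a x₁ := by
      calc dist (Y b x₁) (Y a x₁) ≤ dist b a * Real.exp (lipC N * x₁) := hdep
        _ < (x₁ - Y a x₁) / Real.exp (lipC N * x₁) * Real.exp (lipC N * x₁) := by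
            apply mul_lt_mul_of_pos_right hb (Real.exp_pos _)
        _ = x₁ - Y a x₁ := by field_simp
    rw [Real.dist_eq, abs_sub_lt_iff] at this
    exact ⟨x₁, hx₁0, by linarith [this.1]⟩
  -- openness of B
  have hBopen : IsOpen B := by
    rw [Metric.isOpen_iff]
    rintro a ⟨x₂, hx₂0, hx₂⟩
    have hcont : ContinuousAt (fun w : ℝ => 2 * w ^ 2 * (w - x₂)) (Y a x₂) := by fun_prop
    have hev : ∀ᶠ w in nhds (Y a x₂), 1 < 2 * w ^ 2 * (w - x₂) :=
      hcont.eventually_const_lt hx₂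
    obtain ⟨ε, hε0, hball⟩ := Metric.eventually_nhds_iff_ball.mp hev
    set N := x₂ + 1 with hN
    refine ⟨ε / Real.exp (lipC N * x₂), by positivity, ?_⟩
    intro b hb
    rw [Metric.mem_ball] at hb
    have hdep := depN (N := N) (by linarith) (hYd b) (hYd a) x₂ ⟨hx₂0, by linarith⟩
    rw [hY0, hY0] at hdep
    have : dist (Y b x₂) (Y a x₂) < ε := by
      calc dist (Y b x₂) (Y a x₂) ≤ dist b a * Real.exp (lipC N * x₂) := hdep
        _ < ε / Real.exp (lipC N * x₂) * Real.exp (lipC N * x₂) :=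
            mul_lt_mul_of_pos_right hb (Real.exp_pos _)
        _ = ε := by field_simp
    exact ⟨x₂, hx₂0, hball (Y b x₂) (Metric.mem_ball.mpr this)⟩
  -- disjoint
  have hdisj : ∀ a, a ∈ A → a ∈ B → False := by
    rintro a ⟨x₁, hx₁0, hx₁⟩ ⟨x₂, hx₂0, hx₂⟩
    set x₃ := max x₁ x₂ with hx₃
    have h1 : Y a x₃ < x₃ := below_invariant (hYd a) hx₁0 hx₁ x₃ (le_max_left _ _)
    have h2 : 1 < 2 * Y a x₃ ^ 2 * (Y a x₃ - x₃) :=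
      above_invariant (hYd a) hx₂0 hx₂ x₃ (le_max_right _ _)
    nlinarith [sq_nonneg (Y a x₃)]
  -- 0 ∈ A
  have h0A : (0:ℝ) ∈ A := by
    have hzero : ∀ x ∈ Ici (0:ℝ), HasDerivWithinAt (fun _ => (0:ℝ)) (fc x 0) (Ici (0:ℝ)) x := by
      intro x hx
      have : fc x 0 = 0 := by
        rw [fc, cl_eq x 0 (by norm_num) (by simp only [mem_Ici] at hx; linarith), fv]
        ring
      rw [this]
      exact hasDerivWithinAt_const _ _ _
    have := uniq_global (hYd 0) hzero (by rw [hY0]) 1 (by norm_num)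
    exact ⟨1, by norm_num, by rw [this]; norm_num⟩
  -- 1 ∈ B
  have h1B : (1:ℝ) ∈ B := ⟨0, le_rfl, by rw [hY0]; norm_num⟩
  -- connectedness gives a trapped parameter
  have hstar : ∃ a ∈ Icc (0:ℝ) 1, a ∉ A ∧ a ∉ B := by
    by_contra hcov
    push_neg at hcov
    have hcover : Icc (0:ℝ) 1 ⊆ A ∪ B := by
      intro a ha
      by_cases h : a ∈ A
      · exact Or.inl h
      · exact Or.inr (hcov a ha h)
    obtain ⟨c, _, hcA, hcB⟩ := isPreconnected_Icc (a := (0:ℝ)) (b := 1) A B hAopen hBopen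
      hcover ⟨0, ⟨le_rfl, zero_le_one⟩, h0A⟩ ⟨1, ⟨zero_le_one, le_rfl⟩, h1B⟩
    exact hdisj c hcA hcB
  obtain ⟨a, -, haA, haB⟩ := hstar
  set y := Y a with hy
  have hnA : ∀ x, 0 ≤ x → x ≤ y x := by
    intro x hx
    by_contra h
    exact haA ⟨x, hx, by push_neg at h; exact h⟩
  have hnB : ∀ x, 0 ≤ x → 2 * y x ^ 2 * (y x - x) ≤ 1 := by
    intro x hx
    by_contra h
    exact haB ⟨x, hx, by push_neg at h; exact h⟩
  -- strict: x < y x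
  have hstrict1 : ∀ x, 0 ≤ x → x < y x := by
    intro x₁ hx₁
    rcases lt_or_eq_of_le (hnA x₁ hx₁) with h | h
    · exact h
    -- y x₁ = x₁
    have hfc : fc x₁ (y x₁) = 0 := by
      rw [fc, ← h, cl_eq x₁ x₁ (by linarith) (by linarith), fv]
      ring
    have hd : HasDerivWithinAt (fun x => y x - x) (fc x₁ (y x₁) - 1) (Ici x₁) x₁ :=
      ((hYd a x₁ hx₁).mono (Ici_subset_Ici.mpr hx₁)).sub (hasDerivWithinAt_id _ _)
    obtain ⟨x, hx1, hx2⟩ := exists_lt_of_deriv_neg hd (by rw [hfc]; norm_num)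
      (c := 0) (by simp [← h])
    exact absurd ⟨x, by linarith, by linarith⟩ haA
  -- strict: isocline
  have hstrict2 : ∀ x, 0 ≤ x → 2 * y x ^ 2 * (y x - x) < 1 := by
    intro x₁ hx₁
    rcases lt_or_eq_of_le (hnB x₁ hx₁) with h | h
    · exact h
    -- on the isocline
    have hyx : x₁ < y x₁ := hstrict1 x₁ hx₁
    have hyb : y x₁ ≤ x₁ + 1 := by nlinarith
    have hfc : fc x₁ (y x₁) = 2 * y x₁ ^ 2 * (y x₁ - x₁) := by
      rw [fc, cl_eq x₁ (y x₁) (by linarith) hyb, fv]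
    have hd := (hasDeriv_phi (hYd a) (mem_Ici.mpr hx₁)).mono (Ici_subset_Ici.mpr hx₁)
    have hdpos : 0 < (6 * y x₁ ^ 2 - 4 * x₁ * y x₁) * fc x₁ (y x₁) - 2 * y x₁ ^ 2 := by
      rw [hfc, h]
      nlinarith
    obtain ⟨x, hx1, hx2⟩ := exists_gt_of_deriv_pos hd hdpos h
    exact absurd ⟨x, by linarith, hx2⟩ haB
  -- convert to true field
  have hsol : ∀ x ∈ Ici (0:ℝ),
      HasDerivWithinAt y (2 * y x ^ 2 * (y x - x)) (Ici (0:ℝ)) x ∧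
        x < y x ∧ 2 * y x ^ 2 * (y x - x) < 1 := by
    intro x hx
    rw [mem_Ici] at hx
    have h1 := hstrict1 x hx
    have h2 := hstrict2 x hx
    have hyb : y x ≤ x + 1 := by nlinarith
    have hfc : fc x (y x) = 2 * y x ^ 2 * (y x - x) := by
      rw [fc, cl_eq x (y x) (by linarith) hyb, fv]
    exact ⟨hfc ▸ hYd a x hx, h1, h2⟩
  refine ⟨y, hsol, ?_, ?_⟩
  · -- uniqueness
    intro z hz x hx
    by_contra hne
    rcases lt_or_gt_of_ne hne with h | h
    · exact trapped_cmp hz hsol hx h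
    · exact trapped_cmp hsol hz hx h
  · -- tendsto
    have h2 : Tendsto (fun x : ℝ => 2 * x ^ 2) atTop atTop :=
      (tendsto_pow_atTop (two_ne_zero)).const_mul_atTop (by norm_num)
    have hlim : Tendsto (fun x : ℝ => (2 * x ^ 2)⁻¹) atTop (nhds 0) :=
      h2.inv_tendsto_atTop
    apply tendsto_of_tendsto_of_tendsto_of_le_of_le' tendsto_const_nhds hlim
    · filter_upwards [eventually_ge_atTop (0:ℝ)] with x hx
      have := (hsol x hx).2.1
      linarith
    · filter_upwards [eventually_ge_atTop (1:ℝ)] with x hx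
      obtain ⟨-, h1, h2⟩ := hsol x (by linarith : (0:ℝ) ≤ x)
      rw [inv_eq_one_div, le_div_iff₀ (by nlinarith)]
      nlinarith
end
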